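/- arXiv:math/0109130 — 3 statements merged into one kernel-verified Lean document; each statement's English description precedes it below -/
import Mathlib

section
/- Let σ ∈ L_{2,unif}(ℝ), i.e., σ is locally square-integrable with ‖σ‖²_{2,unif} := sup_{t∈ℝ} ∫_t^{t+1} |σ(s)|² ds < ∞. Then for every f ∈ W^1_2(ℝ), the product σf belongs to L²(ℝ), and moreover ‖σf‖²_{L²(ℝ)} ≤ 72 ‖σ‖²_{2,unif} ‖f‖²_{W^1_2(ℝ)}. -/
/-!
Since `|(f²)'| = 2|f f'| ≤ f² + f'²`, on every window `[x, x + 1]` the value `f(x)²` is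
controlled by `∫ₓ^{x+1} (2 f² + f'²)`. Multiply by `σ(x)²`, integrate in `x` and exchange the
order of integration: a point `y` lies in the window of `x` only for `x ∈ [y - 1, y)`, where `σ²`
has integral at most `M`. This gives `‖σ f‖² ≤ M (2 ‖f‖² + ‖f'‖²)`, well within the constant 72.
-/

open MeasureTheory Set ENNReal

theorem ofReal_intervalIntegral_eq_setLIntegral {g : ℝ → ℝ} {a b : ℝ} (hab : a ≤ b)
    (hg : IntegrableOn g (Ioc a b)) (hg0 : 0 ≤ᵐ[volume.restrict (Ioc a b)] g) :
    ENNReal.ofReal (∫ x in a..b, g x) = ∫⁻ x in Ioc a b, ENNReal.ofReal (g x) := by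
  rw [intervalIntegral.integral_of_le hab, ofReal_integral_eq_lintegral_ofReal hg hg0]

theorem integrable_and_integral_le_of_lintegral_ofReal_le {α : Type*}
    [MeasurableSpace α] {μ : Measure α} {h : α → ℝ} (hm : AEStronglyMeasurable h μ)
    (h0 : 0 ≤ᵐ[μ] h) {c : ℝ} (hc : 0 ≤ c) (hle : ∫⁻ x, ENNReal.ofReal (h x) ∂μ ≤ ENNReal.ofReal c) :
    Integrable h μ ∧ ∫ x, h x ∂μ ≤ c :=
  ⟨⟨hm, (hasFiniteIntegral_iff_ofReal h0).2 (hle.trans_lt ofReal_lt_top)⟩, by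
    rw [integral_eq_lintegral_of_nonneg_ae h0 hm]
    exact toReal_le_of_le_ofReal hc hle⟩

section Derivative

variable {f f' : ℝ → ℝ}

theorem sq_sub_sq_le_integral_sq_add_sq {a b y : ℝ}
    (hf : ∀ x ∈ Icc a b, HasDerivAt f (f' x) x)
    (hf' : IntervalIntegrable (fun x => f' x ^ 2) volume a b) (hy : y ∈ Icc a b) :
    f a ^ 2 - f y ^ 2 ≤ ∫ x in a..b, (f x ^ 2 + f' x ^ 2) := by
  have hab : a ≤ b := hy.1.trans hy.2
  have hcont : ContinuousOn (fun x => f x ^ 2) (Icc a b) :=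
    fun x hx => ((hf x hx).continuousAt.pow 2).continuousWithinAt
  have hint : IntervalIntegrable (fun x => f x ^ 2 + f' x ^ 2) volume a b :=
    ((uIcc_of_le hab ▸ hcont).intervalIntegrable).add hf'
  have hsub : Icc a y ⊆ Icc a b := Icc_subset_Icc_right hy.2
  have hderiv : ∀ x ∈ Ioo a y,
      HasDerivWithinAt (fun x => -f x ^ 2) (-(2 * f x * f' x)) (Ioi x) x := fun x hx =>
    (((hf x (hsub (Ioo_subset_Icc_self hx))).pow 2).neg.congr_deriv (by ring)).hasDerivWithinAt
  calc f a ^ 2 - f y ^ 2 = (fun x => -f x ^ 2) y - (fun x => -f x ^ 2) a := by ring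
    _ ≤ ∫ x in a..y, (f x ^ 2 + f' x ^ 2) := by
      -- this form of FTC needs only an integrable majorant of `(-f²)'`, not integrability of `f f'`
      refine intervalIntegral.sub_le_integral_of_hasDeriv_right_of_le hy.1
        (hcont.mono hsub).neg hderiv
        (((intervalIntegrable_iff_integrableOn_Icc_of_le hab).1 hint).mono_set hsub)
        fun x _ => ?_
      nlinarith [sq_nonneg (f x + f' x)]
    _ ≤ ∫ x in a..b, (f x ^ 2 + f' x ^ 2) :=
      intervalIntegral.integral_mono_interval le_rfl hy.1 hy.2
        (ae_of_all _ fun x => by positivity) hint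

theorem sq_le_integral_two_mul_sq_add_sq {a : ℝ}
    (hf : ∀ x ∈ Icc a (a + 1), HasDerivAt f (f' x) x)
    (hf' : IntervalIntegrable (fun x => f' x ^ 2) volume a (a + 1)) :
    f a ^ 2 ≤ ∫ y in a..a + 1, (2 * f y ^ 2 + f' y ^ 2) := by
  have hf2 : IntervalIntegrable (fun x => f x ^ 2) volume a (a + 1) :=
    ContinuousOn.intervalIntegrable fun x hx =>
      ((hf x (uIcc_of_le (lt_add_one a).le ▸ hx)).continuousAt.pow 2).continuousWithinAt
  calc f a ^ 2 = ∫ _ in a..a + 1, f a ^ 2 := by simp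
    _ ≤ ∫ y in a..a + 1, (f y ^ 2 + ∫ x in a..a + 1, (f x ^ 2 + f' x ^ 2)) :=
      intervalIntegral.integral_mono_on (by linarith) intervalIntegrable_const
        (hf2.add intervalIntegrable_const) fun y hy => by
          linarith [sq_sub_sq_le_integral_sq_add_sq hf hf' hy]
    _ = (∫ y in a..a + 1, f y ^ 2) + ∫ x in a..a + 1, (f x ^ 2 + f' x ^ 2) := by
      rw [intervalIntegral.integral_add hf2 intervalIntegrable_const]
      simp
    _ = ∫ y in a..a + 1, (2 * f y ^ 2 + f' y ^ 2) := by
      rw [← intervalIntegral.integral_add hf2 (hf2.add hf')]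
      congr 1 with y
      ring

end Derivative

theorem lintegral_mul_setLIntegral_Ioc_le {S g : ℝ → ℝ≥0∞} (hS : AEMeasurable S)
    (hg : AEMeasurable g) {M : ℝ≥0∞} (hM : ∀ t, ∫⁻ x in Ioc t (t + 1), S x ≤ M) :
    ∫⁻ x, S x * ∫⁻ y in Ioc x (x + 1), g y ≤ M * ∫⁻ y, g y := by
  set T : Set (ℝ × ℝ) := {p | p.2 ∈ Ioc p.1 (p.1 + 1)}
  have hT : MeasurableSet T :=
    (measurableSet_lt measurable_fst measurable_snd).inter
      (measurableSet_le measurable_snd (measurable_fst.add_const 1))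
  have hmem : ∀ x y : ℝ, (x, y) ∈ T ↔ x ∈ Ico (y - 1) y := fun x y => by
    change y ∈ Ioc x (x + 1) ↔ _
    simp only [mem_Ioc, mem_Ico]
    constructor <;> rintro ⟨h₁, h₂⟩ <;> constructor <;> linarith
  have hwindow : ∀ y, ∫⁻ x in Ico (y - 1) y, S x ≤ M := fun y => by
    simpa using (setLIntegral_congr Ico_ae_eq_Ioc).trans_le (hM (y - 1))
  calc ∫⁻ x, S x * ∫⁻ y in Ioc x (x + 1), g y
      ≤ ∫⁻ x, ∫⁻ y, T.indicator (fun p => S p.1 * g p.2) (x, y) := by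
        refine lintegral_mono fun x => ?_
        rw [← lintegral_indicator measurableSet_Ioc]
        refine (lintegral_const_mul_le _ _).trans_eq (lintegral_congr fun y => ?_)
        by_cases h : y ∈ Ioc x (x + 1)
        · simp [indicator_of_mem h, indicator_of_mem (show (x, y) ∈ T from h)]
        · simp [indicator_of_notMem h, indicator_of_notMem (show (x, y) ∉ T from h)]
    _ = ∫⁻ y, ∫⁻ x, T.indicator (fun p => S p.1 * g p.2) (x, y) :=
      lintegral_lintegral_swap ((hS.comp_fst.mul hg.comp_snd).indicator hT)
    _ = ∫⁻ y, g y * ∫⁻ x in Ico (y - 1) y, S x := by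
        refine lintegral_congr fun y => ?_
        rw [← lintegral_const_mul'' _ hS.restrict, ← lintegral_indicator measurableSet_Ico]
        refine lintegral_congr fun x => ?_
        by_cases h : x ∈ Ico (y - 1) y
        · simp [indicator_of_mem ((hmem x y).2 h), indicator_of_mem h, mul_comm]
        · simp [indicator_of_notMem (mt (hmem x y).1 h), indicator_of_notMem h]
    _ ≤ ∫⁻ y, g y * M := lintegral_mono fun y => mul_le_mul_right (hwindow y) _
    _ = M * ∫⁻ y, g y := by rw [lintegral_mul_const'' _ hg, mul_comm]

/-- If `σ ∈ L_{2,unif}(ℝ)` (with `M` an upper bound for `sup_t ∫_t^{t+1} σ²`) and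
`f ∈ W¹₂(ℝ)`, then `σ f ∈ L²(ℝ)` with `‖σ f‖² ≤ 72 ‖σ‖²_{2,unif} ‖f‖²_{W¹₂}`. -/
theorem mul_sigma_memL2 (σ f f' : ℝ → ℝ) (M : ℝ)
    (hσloc : LocallyIntegrable (fun x => (σ x) ^ 2) volume)
    (hσ : ∀ t : ℝ, ∫ s in t..(t + 1), (σ s) ^ 2 ≤ M)
    (hderiv : ∀ x, HasDerivAt f (f' x) x)
    (hf2 : Integrable (fun x => (f x) ^ 2))
    (hf'2 : Integrable (fun x => (f' x) ^ 2)) :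
    Integrable (fun x => (σ x * f x) ^ 2) ∧
      ∫ x, (σ x * f x) ^ 2 ≤ 72 * M * ((∫ x, (f x) ^ 2) + ∫ x, (f' x) ^ 2) := by
  set g := fun y => 2 * f y ^ 2 + f' y ^ 2
  have hg : Integrable g := (hf2.const_mul 2).add hf'2
  have hg0 : ∀ y, 0 ≤ g y := fun y => by positivity
  have hM : 0 ≤ M :=
    (intervalIntegral.integral_nonneg (by norm_num) fun _ _ => sq_nonneg _).trans (hσ 0)
  have hσM : ∀ t, ∫⁻ x in Ioc t (t + 1), ENNReal.ofReal (σ x ^ 2) ≤ ENNReal.ofReal M := by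
    intro t
    rw [← ofReal_intervalIntegral_eq_setLIntegral (by linarith)
      ((hσloc.integrableOn_isCompact isCompact_Icc).mono_set Ioc_subset_Icc_self)
      (ae_of_all _ fun _ => sq_nonneg _)]
    exact ofReal_le_ofReal (hσ t)
  have hpt : ∀ x, ENNReal.ofReal ((σ x * f x) ^ 2)
      ≤ ENNReal.ofReal (σ x ^ 2) * ∫⁻ y in Ioc x (x + 1), ENNReal.ofReal (g y) := fun x => by
    rw [mul_pow, ofReal_mul (sq_nonneg _),
      ← ofReal_intervalIntegral_eq_setLIntegral (by linarith) hg.integrableOn (ae_of_all _ hg0)]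
    gcongr
    exact sq_le_integral_two_mul_sq_add_sq (fun y _ => hderiv y) hf'2.intervalIntegrable
  have hbound : ∫⁻ x, ENNReal.ofReal ((σ x * f x) ^ 2) ≤ ENNReal.ofReal (M * ∫ y, g y) := by
    calc _ ≤ _ := lintegral_mono hpt
      _ ≤ _ := lintegral_mul_setLIntegral_Ioc_le
          hσloc.aestronglyMeasurable.aemeasurable.ennreal_ofReal hg.aemeasurable.ennreal_ofReal hσM
      _ = _ := by rw [ofReal_mul hM, ofReal_integral_eq_lintegral_ofReal hg (ae_of_all _ hg0)]
  obtain ⟨hint, hle⟩ := integrable_and_integral_le_of_lintegral_ofReal_le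
    ((hσloc.aestronglyMeasurable.mul hf2.aestronglyMeasurable).congr
      (ae_of_all _ fun x => (mul_pow (σ x) (f x) 2).symm))
    (ae_of_all _ fun _ => sq_nonneg _) (mul_nonneg hM (integral_nonneg hg0)) hbound
  refine ⟨hint, hle.trans ?_⟩
  have hA : 0 ≤ ∫ x, f x ^ 2 := integral_nonneg fun x => sq_nonneg (f x)
  have hB : 0 ≤ ∫ x, f' x ^ 2 := integral_nonneg fun x => sq_nonneg (f' x)
  rw [integral_add (hf2.const_mul 2) hf'2, integral_const_mul]
  nlinarith [mul_nonneg hM hA, mul_nonneg hM hB]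
end

section
/- For λ ≥ 0, set C₁ = √(λ + 1/4) + 1/2. Then for all real σ, τ: 4σ² + (C₁² − σ² + τ − λ)²/C₁² ≤ (σ² + |τ| + 2 − 1/C₁)². -/
/-- For `λ ≥ 0` and `C₁ = √(λ + 1/4) + 1/2`:
`4σ² + (C₁² - σ² + τ - λ)²/C₁² ≤ (σ² + |τ| + 2 - 1/C₁)²`. -/
theorem scalar_ineq_nonneg_lambda (lam : ℝ) (hlam : 0 ≤ lam) (C1 : ℝ)
    (hC1 : C1 = Real.sqrt (lam + 1 / 4) + 1 / 2) (σ τ : ℝ) :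
    4 * σ ^ 2 + (C1 ^ 2 - σ ^ 2 + τ - lam) ^ 2 / C1 ^ 2 ≤
      (σ ^ 2 + |τ| + 2 - 1 / C1) ^ 2 := by
  have hs : Real.sqrt (lam + 1 / 4) ^ 2 = lam + 1 / 4 :=
    Real.sq_sqrt (by linarith)
  have hsn : Real.sqrt (lam + 1 / 4) ≥ 1 / 2 := by
    nlinarith [Real.sqrt_nonneg (lam + 1 / 4)]
  have ha1 : 1 ≤ C1 := by rw [hC1]; linarith
  have ha0 : 0 < C1 := by linarith
  have hl : lam = C1 ^ 2 - C1 := by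
    rw [hC1]; nlinarith
  have hT1 : τ ≤ |τ| := le_abs_self τ
  have hT2 : -τ ≤ |τ| := neg_le_abs τ
  have hTsq : |τ| ^ 2 = τ ^ 2 := sq_abs τ
  rw [add_comm, ← le_sub_iff_add_le, div_le_iff₀ (by positivity)]
  have key : ((σ ^ 2 + |τ| + 2 - 1 / C1) ^ 2 - (4 * σ ^ 2)) * C1 ^ 2
      - (C1 ^ 2 - σ ^ 2 + τ - lam) ^ 2 ≥ 0 := by
    have h1 : C1 * (1 / C1) = 1 := mul_one_div_cancel (ne_of_gt ha0)
    have hexp : (σ ^ 2 + |τ| + 2 - 1 / C1) * C1 = (σ ^ 2 + |τ| + 2) * C1 - 1 := by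
      field_simp
    have h2 : ((σ ^ 2 + |τ| + 2 - 1 / C1) ^ 2) * C1 ^ 2
        = ((σ ^ 2 + |τ| + 2) * C1 - 1) ^ 2 := by
      rw [← hexp]; ring
    nlinarith [sq_nonneg σ, sq_nonneg (σ ^ 2 + |τ|), sq_nonneg (C1 - 1),
      mul_nonneg (sub_nonneg.2 ha1) (sq_nonneg σ),
      mul_nonneg (mul_nonneg (sub_nonneg.2 ha1) (sq_nonneg σ)) (abs_nonneg τ),
      mul_nonneg (sq_nonneg σ) (abs_nonneg τ),
      mul_nonneg (mul_nonneg ha0.le (sub_nonneg.2 ha1)) (sq_nonneg σ),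
      mul_nonneg (mul_nonneg ha0.le (sq_nonneg σ)) (abs_nonneg τ),
      mul_nonneg (mul_nonneg (mul_nonneg ha0.le ha0.le) (sq_nonneg σ)) (abs_nonneg τ)]
  nlinarith [key]
end

section
/- Suppose f ∈ W^1_2(ℝ), a > 1, and b ≥ e. Then ∫_1^b |f(t) − f(at)|² dt ≤ 7 a b² (a−1)² ‖f‖²_{W^1_2(ℝ)}. (In fact the proof gives the bound with (log a)² in place of (a−1)², which is stronger since log a ≤ a − 1.) -/
/-!
By the fundamental theorem of calculus and Cauchy–Schwarz, for `1 ≤ t ≤ b`,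
`(f t - f (a t))² ≤ (a - 1) t (F (a t) - F t) ≤ b (a - 1) (F (a t) - F t)`, where
`F x = ∫_{-∞}^x f'²` is monotone with values in `[0, ‖f'‖²]`. Substituting `s = a t`,
`∫_1^b (F (a t) - F t) dt = a⁻¹ ∫_a^{ab} F - ∫_1^b F ≤ a⁻¹ (∫_b^{ab} F - ∫_1^a F)`,
which is at most `(1 - a⁻¹) b ‖f'‖²`.
Altogether the left-hand side is at most `b² (a - 1)² / a · ‖f'‖²`.
-/

open MeasureTheory Set

theorem sq_intervalIntegral_le_mul {g : ℝ → ℝ} {t u : ℝ} (htu : t ≤ u)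
    (hg : IntervalIntegrable g volume t u)
    (hg2 : IntervalIntegrable (fun s => g s ^ 2) volume t u) :
    (∫ s in t..u, g s) ^ 2 ≤ (u - t) * ∫ s in t..u, g s ^ 2 := by
  -- the quadratic `c ↦ ∫ (g - c)²` is nonnegative, so its discriminant is nonpositive
  have hquad : ∀ c : ℝ, 0 ≤ (u - t) * (c * c) + (-2 * ∫ s in t..u, g s) * c +
      ∫ s in t..u, g s ^ 2 := by
    intro c
    have hexpand : ∫ s in t..u, (g s - c) ^ 2 =
        (u - t) * (c * c) + (-2 * ∫ s in t..u, g s) * c + ∫ s in t..u, g s ^ 2 := by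
      have hsq : ∀ s, (g s - c) ^ 2 = g s ^ 2 - 2 * c * g s + c * c := fun s => by ring
      simp only [hsq]
      rw [intervalIntegral.integral_add (hg2.sub (hg.const_mul _)) intervalIntegrable_const,
        intervalIntegral.integral_sub hg2 (hg.const_mul _), intervalIntegral.integral_const_mul,
        intervalIntegral.integral_const, smul_eq_mul]
      ring
    exact hexpand ▸ intervalIntegral.integral_nonneg htu fun s _ => sq_nonneg _
  have hdiscrim := discrim_le_zero hquad
  rw [discrim] at hdiscrim
  linarith

theorem sq_sub_le_mul_intervalIntegral_sq {f f' : ℝ → ℝ} {t u : ℝ} (htu : t ≤ u)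
    (hderiv : ∀ x ∈ uIcc t u, HasDerivAt f (f' x) x)
    (hf' : MemLp f' 2 (volume.restrict (Ioc t u))) :
    (f u - f t) ^ 2 ≤ (u - t) * ∫ s in t..u, f' s ^ 2 := by
  have hint : IntervalIntegrable f' volume t u :=
    (intervalIntegrable_iff_integrableOn_Ioc_of_le htu).2 (hf'.integrable one_le_two)
  have hint2 : IntervalIntegrable (fun s => f' s ^ 2) volume t u :=
    (intervalIntegrable_iff_integrableOn_Ioc_of_le htu).2 hf'.integrable_sq
  rw [← intervalIntegral.integral_eq_sub_of_hasDerivAt hderiv hint]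
  exact sq_intervalIntegral_le_mul htu hint hint2

theorem intervalIntegral_comp_mul_sub_le {F : ℝ → ℝ} {M a b : ℝ} (hF : Monotone F)
    (hF0 : ∀ x, 0 ≤ F x) (hFM : ∀ x, F x ≤ M) (ha : 1 ≤ a) (hb : 1 ≤ b) :
    ∫ t in (1:ℝ)..b, (F (a * t) - F t) ≤ (a - 1) / a * b * M := by
  have ha0 : 0 < a := by linarith
  have hsub : (∫ x in a..a * b, F x) - ∫ x in (1:ℝ)..b, F x =
      (∫ x in b..a * b, F x) - ∫ x in (1:ℝ)..a, F x :=
    intervalIntegral.integral_interval_sub_interval_comm' hF.intervalIntegrable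
      hF.intervalIntegrable hF.intervalIntegrable
  have htop : ∫ x in b..a * b, F x ≤ (a * b - b) * M := by
    have hle : ∫ x in b..a * b, F x ≤ ∫ _ in b..a * b, M :=
      intervalIntegral.integral_mono_on (by nlinarith) hF.intervalIntegrable
        intervalIntegrable_const fun x _ => hFM x
    rwa [intervalIntegral.integral_const, smul_eq_mul] at hle
  have hhead : 0 ≤ ∫ x in (1:ℝ)..a, F x :=
    intervalIntegral.integral_nonneg ha fun x _ => hF0 x
  have hwhole : 0 ≤ ∫ x in (1:ℝ)..b, F x :=
    intervalIntegral.integral_nonneg hb fun x _ => hF0 x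
  have hainv : a⁻¹ ≤ 1 := inv_le_one_of_one_le₀ ha
  have hFa : Monotone fun t => F (a * t) := hF.comp (monotone_mul_left_of_nonneg ha0.le)
  rw [intervalIntegral.integral_sub hFa.intervalIntegrable hF.intervalIntegrable,
    intervalIntegral.integral_comp_mul_left F ha0.ne', mul_one, smul_eq_mul]
  calc a⁻¹ * (∫ x in a..a * b, F x) - ∫ x in (1:ℝ)..b, F x
      ≤ a⁻¹ * ((∫ x in a..a * b, F x) - ∫ x in (1:ℝ)..b, F x) := by
        nlinarith [mul_le_mul_of_nonneg_right hainv hwhole]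
    _ ≤ a⁻¹ * ((a * b - b) * M) := by gcongr; linarith
    _ = (a - 1) / a * b * M := by field_simp

theorem sq_sub_comp_mul_le {f f' : ℝ → ℝ} (hderiv : ∀ x, HasDerivAt f (f' x) x)
    (hf' : MemLp f' 2 volume) {a t : ℝ} (ha : 1 ≤ a) (ht : 0 ≤ t) :
    (f t - f (a * t)) ^ 2 ≤ (a - 1) * t * ∫ s in t..a * t, f' s ^ 2 := by
  have hta : t ≤ a * t := le_mul_of_one_le_left ht ha
  calc (f t - f (a * t)) ^ 2 = (f (a * t) - f t) ^ 2 := by ring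
    _ ≤ (a * t - t) * ∫ s in t..a * t, f' s ^ 2 :=
      sq_sub_le_mul_intervalIntegral_sq hta (fun x _ => hderiv x) (hf'.restrict _)
    _ = (a - 1) * t * ∫ s in t..a * t, f' s ^ 2 := by ring

theorem integral_sq_sub_comp_mul_le {f f' : ℝ → ℝ} (hderiv : ∀ x, HasDerivAt f (f' x) x)
    (hf'2 : Integrable (fun x => f' x ^ 2)) {a b : ℝ} (ha : 1 ≤ a) (hb : 1 ≤ b) :
    ∫ t in (1:ℝ)..b, (f t - f (a * t)) ^ 2 ≤ b ^ 2 * (a - 1) ^ 2 / a * ∫ x, f' x ^ 2 := by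
  have hf' : MemLp f' 2 volume := by
    have hmeas : Measurable f' := funext (fun x => (hderiv x).deriv) ▸ measurable_deriv f
    exact (memLp_two_iff_integrable_sq hmeas.aestronglyMeasurable).2 hf'2
  set F : ℝ → ℝ := fun x => ∫ s in Iic x, f' s ^ 2
  have hF : Monotone F := fun x y hxy =>
    setIntegral_mono_set hf'2.integrableOn (.of_forall fun s => sq_nonneg _)
      (Iic_subset_Iic.2 hxy).eventuallyLE
  have hpointwise :
      ∀ t ∈ Icc 1 b, (f t - f (a * t)) ^ 2 ≤ b * (a - 1) * (F (a * t) - F t) := by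
    rintro t ⟨ht1, htb⟩
    have hwindow : F (a * t) - F t = ∫ s in t..a * t, f' s ^ 2 :=
      intervalIntegral.integral_Iic_sub_Iic hf'2.integrableOn hf'2.integrableOn
    rw [hwindow]
    refine (sq_sub_comp_mul_le hderiv hf' ha (by linarith)).trans ?_
    rw [mul_comm b]
    gcongr
    exact intervalIntegral.integral_nonneg (le_mul_of_one_le_left (by linarith) ha)
      fun s _ => sq_nonneg _
  have hf : Continuous f := continuous_iff_continuousAt.2 fun x => (hderiv x).continuousAt
  have hdiff : IntervalIntegrable (fun t => F (a * t) - F t) volume 1 b :=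
    (hF.comp (monotone_mul_left_of_nonneg (by linarith))).intervalIntegrable.sub
      hF.intervalIntegrable
  calc ∫ t in (1:ℝ)..b, (f t - f (a * t)) ^ 2
      ≤ ∫ t in (1:ℝ)..b, b * (a - 1) * (F (a * t) - F t) :=
        intervalIntegral.integral_mono_on hb
          (((hf.sub (hf.comp (continuous_const_mul a))).pow 2).intervalIntegrable _ _)
          (hdiff.const_mul _) hpointwise
    _ = b * (a - 1) * ∫ t in (1:ℝ)..b, (F (a * t) - F t) :=
        intervalIntegral.integral_const_mul _ _
    _ ≤ b * (a - 1) * ((a - 1) / a * b * ∫ x, f' x ^ 2) := by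
        gcongr
        exact intervalIntegral_comp_mul_sub_le hF
          (fun x => setIntegral_nonneg measurableSet_Iic fun s _ => sq_nonneg _)
          (fun x => setIntegral_le_integral hf'2 (.of_forall fun s => sq_nonneg _)) ha hb
    _ = b ^ 2 * (a - 1) ^ 2 / a * ∫ x, f' x ^ 2 := by ring

theorem dilation_estimate_general (f f' : ℝ → ℝ)
    (hderiv : ∀ x, HasDerivAt f (f' x) x)
    (hf'2 : Integrable (fun x => (f' x) ^ 2))
    (a b : ℝ) (ha : 1 < a) (hb : Real.exp 1 ≤ b) :
    ∫ t in (1:ℝ)..b, (f t - f (a * t)) ^ 2 ≤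
      7 * a * b ^ 2 * (a - 1) ^ 2 * ((∫ x, (f x) ^ 2) + ∫ x, (f' x) ^ 2) := by
  have hb1 : 1 ≤ b := (Real.one_le_exp zero_le_one).trans hb
  have hI : 0 ≤ ∫ x, f' x ^ 2 := integral_nonneg fun x => sq_nonneg _
  have hJ : 0 ≤ ∫ x, f x ^ 2 := integral_nonneg fun x => sq_nonneg _
  have hc : 0 ≤ b ^ 2 * (a - 1) ^ 2 := by positivity
  calc ∫ t in (1:ℝ)..b, (f t - f (a * t)) ^ 2
      ≤ b ^ 2 * (a - 1) ^ 2 / a * ∫ x, f' x ^ 2 :=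
        integral_sq_sub_comp_mul_le hderiv hf'2 ha.le hb1
    _ ≤ b ^ 2 * (a - 1) ^ 2 * ∫ x, f' x ^ 2 := by gcongr; exact div_le_self hc ha.le
    _ ≤ 7 * a * b ^ 2 * (a - 1) ^ 2 * ((∫ x, (f x) ^ 2) + ∫ x, (f' x) ^ 2) := by
      nlinarith [mul_nonneg hc hJ,
        mul_nonneg (mul_nonneg hc (add_nonneg hJ hI)) (sub_nonneg.2 ha.le)]

/-- Dilation estimate for Sobolev functions: for `f ∈ W¹₂(ℝ)`, `a > 1`, `b ≥ e`,
`∫_1^b |f(t) - f(at)|² dt ≤ 7 a b² (a-1)² ‖f‖²_{W¹₂(ℝ)}`. -/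
theorem dilation_estimate (f f' : ℝ → ℝ)
    (hderiv : ∀ x, HasDerivAt f (f' x) x)
    (hf2 : Integrable (fun x => (f x) ^ 2))
    (hf'2 : Integrable (fun x => (f' x) ^ 2))
    (a b : ℝ) (ha : 1 < a) (hb : Real.exp 1 ≤ b) :
    ∫ t in (1:ℝ)..b, (f t - f (a * t)) ^ 2 ≤
      7 * a * b ^ 2 * (a - 1) ^ 2 * ((∫ x, (f x) ^ 2) + ∫ x, (f' x) ^ 2) :=
  dilation_estimate_general f f' hderiv hf'2 a b ha hb
end
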